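/- Non-increasing cost for nonlinear systems (Corollary 1): consider the P-periodic system x_{t+1} = f_t(x_t, u_t) under Assumptions 1–4 (in particular Assumption 3 holds and the stage cost does not depend on the input, h_t(x, u) = h_t(x)), in closed loop with the LMPC that at each time t ≥ P applies the first input of an optimal plan. Suppose that at times t and t+1 optimal plans exist (the minimum of the plan cost over all feasible plans is attained). Then the optimal values satisfy J^LMPC_{t→t+N}(x_t) ≥ J^LMPC_{t+1→t+1+N}(x_{t+1}) for all t ≥ P. -/

import Mathlib

/-!
Shift the optimal plan at time `t` by one step. Its terminal state is a convex combination
`∑ λⱼ x (t+N-jP)` of stored closed-loop states; by periodicity and Assumption 3 the same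
combination of their successors `x (t+N+1-jP)` is reached in one admissible step, so it serves
as terminal state of a feasible plan at `t + 1`. Comparing costs, the stage cost `h t (x t)`
leaves the horizon and reappears in every return-cost, while `h (t+N)` of the old terminal state
enters the horizon and each `h (t+N) (x (t+N-jP))` leaves a return-cost. What remains is
`h (t+N) (∑ λⱼ x (t+N-jP)) - ∑ λⱼ h (t+N) (x (t+N-jP)) ≤ 0`, which is Jensen's inequality.
-/

/-- A feasible plan at time `t` for the LMPC problem with dynamics
`x (k+1) = f k (x k) (u k)`: it starts at the current state `x t`, satisfies the
dynamics and the state and input constraints over the horizon `N`, and its terminal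
state is the convex combination `∑_j λ_j x (t+N-jP)` (with `j = 1, …, M`,
`M = ⌊t/P⌋`) of states in the sampled safe set. -/
def FeasPlanNL {n d : ℕ} (P N : ℕ)
    (f : ℕ → (Fin n → ℝ) → (Fin d → ℝ) → (Fin n → ℝ))
    (X : ℕ → Set (Fin n → ℝ)) (U : ℕ → Set (Fin d → ℝ))
    (x : ℕ → Fin n → ℝ) (t : ℕ)
    (xb : ℕ → Fin n → ℝ) (ub : ℕ → Fin d → ℝ) (lam : Fin (t / P) → ℝ) : Prop :=
  (∀ j, 0 ≤ lam j) ∧ (∑ j, lam j = 1) ∧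
  xb t = x t ∧
  (∀ k, t ≤ k → k < t + N → xb (k + 1) = f k (xb k) (ub k)) ∧
  (∀ k, t ≤ k → k < t + N → xb k ∈ X k ∧ ub k ∈ U k) ∧
  xb (t + N) = ∑ j : Fin (t / P), lam j • x (t + N - (j.1 + 1) * P)

/-- The cost of a plan at time `t` for a stage cost depending only on the state:
the sum of the stage costs over the horizon plus the `Q`-function value
`∑_j λ_j J_t(x (t+N-jP))`, where `J t i = ∑_{k=i}^{t-1} h k (x k)` is the
return-cost. -/
def PlanCostNL {n : ℕ} (P N : ℕ)
    (h : ℕ → (Fin n → ℝ) → ℝ)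
    (x : ℕ → Fin n → ℝ) (t : ℕ)
    (xb : ℕ → Fin n → ℝ) (lam : Fin (t / P) → ℝ) : ℝ :=
  (∑ k ∈ Finset.Ico t (t + N), h k (xb k))
    + ∑ j : Fin (t / P), lam j *
        ∑ k ∈ Finset.Ico (t + N - (j.1 + 1) * P) t, h k (x k)

open Finset Function

def ConvexTransitions {n d : ℕ} (f : ℕ → (Fin n → ℝ) → (Fin d → ℝ) → (Fin n → ℝ))
    (X : ℕ → Set (Fin n → ℝ)) (U : ℕ → Set (Fin d → ℝ)) : Prop :=
  ∀ (t' L : ℕ) (xs : Fin (L + 1) → Fin n → ℝ) (us : Fin (L + 1) → Fin d → ℝ),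
    (∀ j, xs j ∈ X t' ∧ us j ∈ U t' ∧ f t' (xs j) (us j) ∈ X (t' + 1)) →
    ∀ lam : Fin (L + 1) → ℝ, (∀ j, 0 ≤ lam j) → (∑ j, lam j = 1) →
      ∃ gam : Fin (L + 1) → ℝ, (∀ j, 0 ≤ gam j) ∧ (∑ j, gam j = 1) ∧
        f t' (∑ j, lam j • xs j) (∑ j, gam j • us j) = ∑ j, lam j • f t' (xs j) (us j)

theorem ConvexTransitions.exists_input {n d : ℕ}
    {f : ℕ → (Fin n → ℝ) → (Fin d → ℝ) → (Fin n → ℝ)}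
    {X : ℕ → Set (Fin n → ℝ)} {U : ℕ → Set (Fin d → ℝ)} (hA3 : ConvexTransitions f X U)
    {τ M : ℕ} (hU : Convex ℝ (U τ)) (xs : Fin M → Fin n → ℝ) (us : Fin M → Fin d → ℝ)
    (hadm : ∀ j, xs j ∈ X τ ∧ us j ∈ U τ ∧ f τ (xs j) (us j) ∈ X (τ + 1))
    (lam : Fin M → ℝ) (h0 : ∀ j, 0 ≤ lam j) (h1 : ∑ j, lam j = 1) :
    ∃ v ∈ U τ, f τ (∑ j, lam j • xs j) v = ∑ j, lam j • f τ (xs j) (us j) := by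
  obtain ⟨L, rfl⟩ : ∃ L, M = L + 1 := by
    cases M with
    | zero => simp at h1
    | succ L => exact ⟨L, rfl⟩
  obtain ⟨gam, hgam0, hgam1, hfgam⟩ := hA3 τ L xs us hadm lam h0 h1
  exact ⟨_, hU.sum_mem (fun j _ => hgam0 j) hgam1 (fun j _ => (hadm j).2.1), hfgam⟩

theorem Function.Periodic.eq_of_add_nat_mul {α : Type*} {g : ℕ → α} {P i m τ : ℕ}
    (hg : Periodic g P) (h : i + m * P = τ) : g τ = g i := by
  subst h
  exact hg.nat_mul m i

theorem Finset.sum_Ico_succ_succ {M : Type*} [AddCommGroup M] (g : ℕ → M) {a b : ℕ}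
    (hab : a ≤ b) :
    ∑ k ∈ Ico (a + 1) (b + 1), g k = ∑ k ∈ Ico a b, g k - g a + g b := by
  have := (sum_eq_sum_Ico_succ_bot (Nat.lt_succ_of_le hab) g).symm.trans
    (sum_Ico_succ_top hab g)
  rw [sub_add_eq_add_sub, ← this]
  abel

theorem Nat.succ_mul_le_of_lt_div {j t P : ℕ} (hj : j < t / P) : (j + 1) * P ≤ t :=
  (Nat.mul_le_mul_right P hj).trans (Nat.div_mul_le_self t P)

-- The sampled safe set at time `t + 1` stores `(t + 1) / P` iterations, possibly one more than at `t`.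
def extendWeights {m : ℕ} (lam : Fin m → ℝ) (m' : ℕ) : Fin m' → ℝ :=
  fun j => if hj : j.1 < m then lam ⟨j, hj⟩ else 0

theorem extendWeights_nonneg {m : ℕ} {lam : Fin m → ℝ} (h0 : ∀ j, 0 ≤ lam j) (m' : ℕ)
    (j : Fin m') : 0 ≤ extendWeights lam m' j := by
  unfold extendWeights
  split_ifs
  exacts [h0 _, le_rfl]

theorem sum_extendWeights {M : Type*} [AddCommMonoid M] {m m' : ℕ} (hm : m ≤ m')
    (lam : Fin m → ℝ) (F : ℕ → ℝ → M) (hF : ∀ j, F j 0 = 0) :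
    ∑ j : Fin m', F j (extendWeights lam m' j) = ∑ j : Fin m, F j (lam j) := by
  refine (Fintype.sum_of_injective (Fin.castLE hm) (Fin.castLE_injective hm) _ _ ?_ ?_).symm
  · intro j hj
    have : ¬ j.1 < m := fun hjm => hj ⟨⟨j, hjm⟩, rfl⟩
    simp [extendWeights, this, hF]
  · intro j
    simp [extendWeights]

section Plans

variable {n d P N : ℕ} {f : ℕ → (Fin n → ℝ) → (Fin d → ℝ) → (Fin n → ℝ)}
  {X : ℕ → Set (Fin n → ℝ)} {U : ℕ → Set (Fin d → ℝ)} {h : ℕ → (Fin n → ℝ) → ℝ}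
  {x : ℕ → Fin n → ℝ} {u : ℕ → Fin d → ℝ} {t : ℕ}
  {xb : ℕ → Fin n → ℝ} {ub : ℕ → Fin d → ℝ} {lam : Fin (t / P) → ℝ}

theorem sample_sub_add_cancel (j : Fin (t / P)) :
    t + N - (j.1 + 1) * P + (j.1 + 1) * P = t + N := by
  have := Nat.succ_mul_le_of_lt_div j.2
  omega

theorem FeasPlanNL.mem_start (hp : FeasPlanNL P N f X U x t xb ub lam) (hN : 1 ≤ N) :
    x t ∈ X t ∧ ub t ∈ U t := by
  rw [← hp.2.2.1]
  exact hp.2.2.2.2.1 t le_rfl (by omega)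

section Trajectory

variable (hf : Periodic f P) (hXper : Periodic X P) (hUper : Periodic U P)
  (hdyn : ∀ k, x (k + 1) = f k (x k) (u k)) (hxX : ∀ k, x k ∈ X k) (huU : ∀ k, u k ∈ U k)
include hXper hxX

theorem sum_smul_sample_mem (hX : Convex ℝ (X (t + N))) (h0 : ∀ j, 0 ≤ lam j)
    (h1 : ∑ j, lam j = 1) :
    ∑ j, lam j • x (t + N - (j.1 + 1) * P) ∈ X (t + N) :=
  hX.sum_mem (fun j _ => h0 j) h1 fun j _ =>
    hXper.eq_of_add_nat_mul (sample_sub_add_cancel j) ▸ hxX _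

include hf hUper hdyn huU in
theorem exists_input_to_shifted_sample (hA3 : ConvexTransitions f X U)
    (hU : Convex ℝ (U (t + N))) (h0 : ∀ j, 0 ≤ lam j) (h1 : ∑ j, lam j = 1) :
    ∃ v ∈ U (t + N), f (t + N) (∑ j, lam j • x (t + N - (j.1 + 1) * P)) v =
      ∑ j, lam j • x (t + 1 + N - (j.1 + 1) * P) := by
  have hstep : ∀ j : Fin (t / P),
      f (t + N) (x (t + N - (j.1 + 1) * P)) (u (t + N - (j.1 + 1) * P)) =
        x (t + 1 + N - (j.1 + 1) * P) := by
    intro j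
    have hsucc : t + 1 + N - (j.1 + 1) * P = t + N - (j.1 + 1) * P + 1 := by
      have := sample_sub_add_cancel (N := N) j
      omega
    rw [hf.eq_of_add_nat_mul (sample_sub_add_cancel j), ← hdyn, hsucc]
  have hadm : ∀ j : Fin (t / P),
      x (t + N - (j.1 + 1) * P) ∈ X (t + N) ∧ u (t + N - (j.1 + 1) * P) ∈ U (t + N) ∧
        f (t + N) (x (t + N - (j.1 + 1) * P)) (u (t + N - (j.1 + 1) * P)) ∈ X (t + N + 1) := by
    intro j
    have hsucc : t + 1 + N - (j.1 + 1) * P + (j.1 + 1) * P = t + N + 1 := by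
      have := sample_sub_add_cancel (N := N) j
      omega
    refine ⟨hXper.eq_of_add_nat_mul (sample_sub_add_cancel j) ▸ hxX _,
      hUper.eq_of_add_nat_mul (sample_sub_add_cancel j) ▸ huU _, ?_⟩
    rw [hstep j, hXper.eq_of_add_nat_mul hsucc]
    exact hxX _
  obtain ⟨v, hv, hfv⟩ := hA3.exists_input hU _ _ hadm lam h0 h1
  exact ⟨v, hv, hfv.trans (sum_congr rfl fun j _ => by rw [hstep j])⟩

end Trajectory

theorem FeasPlanNL.shift (hp : FeasPlanNL P N f X U x t xb ub lam) (hN : 1 ≤ N)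
    (hcl : x (t + 1) = f t (x t) (ub t)) (hmem : xb (t + N) ∈ X (t + N)) {v : Fin d → ℝ}
    (hv : v ∈ U (t + N))
    (hfv : f (t + N) (xb (t + N)) v = ∑ j, lam j • x (t + 1 + N - (j.1 + 1) * P)) :
    FeasPlanNL P N f X U x (t + 1)
      (update xb (t + N + 1) (∑ j, lam j • x (t + 1 + N - (j.1 + 1) * P)))
      (update ub (t + N) v) (extendWeights lam ((t + 1) / P)) := by
  obtain ⟨h0, h1, hx0, hdynp, hconp, -⟩ := hp
  have hM : t / P ≤ (t + 1) / P := Nat.div_le_div_right t.le_succ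
  refine ⟨extendWeights_nonneg h0 _, ?_, ?_, ?_, ?_, ?_⟩
  · rw [sum_extendWeights hM lam (fun _ a => a) fun _ => rfl, h1]
  · rw [update_of_ne (by omega), hdynp t le_rfl (by omega), hx0, hcl]
  · intro k hk1 hk2
    by_cases hkN : k = t + N
    · subst hkN
      rw [update_self, update_of_ne (by omega), update_self, hfv]
    · rw [update_of_ne (by omega), update_of_ne (by omega), update_of_ne hkN]
      exact hdynp k (by omega) (by omega)
  · intro k hk1 hk2
    by_cases hkN : k = t + N
    · subst hkN
      rw [update_of_ne (by omega), update_self]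
      exact ⟨hmem, hv⟩
    · rw [update_of_ne (by omega), update_of_ne hkN]
      exact hconp k (by omega) (by omega)
  · rw [show t + 1 + N = t + N + 1 by omega, update_self,
      sum_extendWeights hM lam (fun j a => a • x (t + N + 1 - (j + 1) * P)) fun _ => zero_smul _ _]

theorem planCostNL_shift (hNP : N < P) (hhper : Periodic h P) {xb' : ℕ → Fin n → ℝ}
    (hxb : ∀ k ∈ Ico (t + 1) (t + 1 + N), xb' k = xb k) (h1 : ∑ j, lam j = 1) :
    PlanCostNL P N h x (t + 1) xb' (extendWeights lam ((t + 1) / P)) =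
      PlanCostNL P N h x t xb lam - h t (xb t) + h t (x t) +
        (h (t + N) (xb (t + N)) - ∑ j, lam j * h (t + N) (x (t + N - (j.1 + 1) * P))) := by
  have hstage : ∑ k ∈ Ico (t + 1) (t + 1 + N), h k (xb' k) =
      ∑ k ∈ Ico t (t + N), h k (xb k) - h t (xb t) + h (t + N) (xb (t + N)) := by
    rw [sum_congr rfl fun k hk => by rw [hxb k hk], show t + 1 + N = t + N + 1 by omega]
    exact sum_Ico_succ_succ (fun k => h k (xb k)) (by omega)
  have hreturn : ∀ j : Fin (t / P),
      ∑ k ∈ Ico (t + 1 + N - (j.1 + 1) * P) (t + 1), h k (x k) =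
        ∑ k ∈ Ico (t + N - (j.1 + 1) * P) t, h k (x k) -
          h (t + N) (x (t + N - (j.1 + 1) * P)) + h t (x t) := by
    intro j
    have hs := sample_sub_add_cancel (N := N) j
    have hP : P ≤ (j.1 + 1) * P := Nat.le_mul_of_pos_left P j.1.succ_pos
    rw [show t + 1 + N - (j.1 + 1) * P = t + N - (j.1 + 1) * P + 1 by omega,
      sum_Ico_succ_succ (fun k => h k (x k)) (by omega), hhper.eq_of_add_nat_mul hs]
  unfold PlanCostNL
  rw [hstage, sum_extendWeights (Nat.div_le_div_right t.le_succ) lam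
    (fun j a => a * ∑ k ∈ Ico (t + 1 + N - (j + 1) * P) (t + 1), h k (x k)) fun _ => zero_mul _]
  simp only [hreturn, mul_add, mul_sub, sum_add_distrib, sum_sub_distrib, ← sum_mul, h1]
  ring

theorem exists_feasPlanNL_succ_le (hN : 1 ≤ N) (hNP : N < P) (hf : Periodic f P)
    (hX : ∀ t, Convex ℝ (X t)) (hXper : Periodic X P)
    (hU : ∀ t, Convex ℝ (U t)) (hUper : Periodic U P)
    (hconv : ∀ k, ConvexOn ℝ Set.univ (h k)) (hhper : Periodic h P)
    (hA3 : ConvexTransitions f X U) (hdyn : ∀ k, x (k + 1) = f k (x k) (u k))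
    (hxX : ∀ k, x k ∈ X k) (huU : ∀ k, u k ∈ U k)
    (hp : FeasPlanNL P N f X U x t xb ub lam) (hcl : x (t + 1) = f t (x t) (ub t)) :
    ∃ xb' ub' lam', FeasPlanNL P N f X U x (t + 1) xb' ub' lam' ∧
      PlanCostNL P N h x (t + 1) xb' lam' ≤ PlanCostNL P N h x t xb lam := by
  have ⟨h0, h1, hx0, _, _, hterm⟩ := hp
  obtain ⟨v, hv, hfv⟩ :=
    exists_input_to_shifted_sample hf hXper hUper hdyn hxX huU hA3 (hU _) h0 h1
  refine ⟨_, _, _, hp.shift hN hcl (hterm ▸ sum_smul_sample_mem hXper hxX (hX _) h0 h1) hv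
    (hterm ▸ hfv), ?_⟩
  have hjensen : h (t + N) (xb (t + N)) ≤ ∑ j, lam j * h (t + N) (x (t + N - (j.1 + 1) * P)) :=
    hterm ▸ (hconv (t + N)).map_sum_le (fun j _ => h0 j) h1 fun _ _ => Set.mem_univ _
  rw [planCostNL_shift hNP hhper (fun k hk => update_of_ne (by simp at hk; omega) _ _) h1, hx0]
  linarith

end Plans

theorem lmpc_nonincreasing_cost_nonlinear_general {n d : ℕ} (P N : ℕ) (hN : 1 ≤ N) (hNP : N < P)
    (f : ℕ → (Fin n → ℝ) → (Fin d → ℝ) → (Fin n → ℝ))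
    (hf : ∀ t, f (t + P) = f t)
    (X : ℕ → Set (Fin n → ℝ)) (U : ℕ → Set (Fin d → ℝ))
    -- Assumption 1 (with Assumption 4: the stage cost does not depend on the input):
    (hX : ∀ t, Convex ℝ (X t)) (hXper : ∀ t, X (t + P) = X t)
    (hU : ∀ t, Convex ℝ (U t)) (hUper : ∀ t, U (t + P) = U t)
    (h : ℕ → (Fin n → ℝ) → ℝ)
    (hconv : ∀ k, ConvexOn ℝ Set.univ (h k))
    (hhper : ∀ k, h (k + P) = h k)
    -- Assumption 3:
    (hA3 : ∀ (t' L : ℕ) (xs : Fin (L + 1) → Fin n → ℝ) (us : Fin (L + 1) → Fin d → ℝ),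
      (∀ j, xs j ∈ X t' ∧ us j ∈ U t' ∧ f t' (xs j) (us j) ∈ X (t' + 1)) →
      ∀ lam : Fin (L + 1) → ℝ, (∀ j, 0 ≤ lam j) → (∑ j, lam j = 1) →
        ∃ gam : Fin (L + 1) → ℝ, (∀ j, 0 ≤ gam j) ∧ (∑ j, gam j = 1) ∧
          f t' (∑ j, lam j • xs j) (∑ j, gam j • us j) = ∑ j, lam j • f t' (xs j) (us j))
    -- closed-loop trajectory and inputs:
    (x : ℕ → Fin n → ℝ) (u : ℕ → Fin d → ℝ)
    -- Assumption 2: feasible `P`-periodic initial trajectory on `0, …, P`: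
    (hdyn0 : ∀ k, k < P → x (k + 1) = f k (x k) (u k))
    (hxcon0 : ∀ k, k ≤ P → x k ∈ X k)
    (hucon0 : ∀ k, k < P → u k ∈ U k)
    -- the LMPC optimal value `vstar t` is attained for every `t ≥ P`:
    (vstar : ℕ → ℝ)
    (hopt : ∀ t, P ≤ t → IsLeast
      {c : ℝ | ∃ xb ub lam, FeasPlanNL P N f X U x t xb ub lam ∧
        PlanCostNL P N h x t xb lam = c} (vstar t))
    -- the closed loop applies the first input of an optimal plan:
    (hsel : ∀ t, P ≤ t → ∃ xb ub lam,
      FeasPlanNL P N f X U x t xb ub lam ∧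
      PlanCostNL P N h x t xb lam = vstar t ∧ u t = ub t)
    (hcl : ∀ t, P ≤ t → x (t + 1) = f t (x t) (u t)) :
    ∀ t, P ≤ t → vstar t ≥ vstar (t + 1) := by

  intro t ht
  have hdyn : ∀ k, x (k + 1) = f k (x k) (u k) := fun k =>
    (lt_or_ge k P).elim (hdyn0 k) (hcl k)
  have hadm : ∀ k, x k ∈ X k ∧ u k ∈ U k := by
    intro k
    rcases lt_or_ge k P with hk | hk
    · exact ⟨hxcon0 k hk.le, hucon0 k hk⟩
    · obtain ⟨xb, ub, lam, hp, -, hu⟩ := hsel k hk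
      exact hu ▸ hp.mem_start hN
  obtain ⟨xb, ub, lam, hp, hcost, hu⟩ := hsel t ht
  obtain ⟨xb', ub', lam', hp', hle⟩ := exists_feasPlanNL_succ_le hN hNP hf hX hXper hU hUper
    hconv hhper hA3 hdyn (fun k => (hadm k).1) (fun k => (hadm k).2) hp (hu ▸ hcl t ht)
  exact ((hopt (t + 1) (by omega)).2 ⟨xb', ub', lam', hp', rfl⟩).trans (hcost ▸ hle)

/-- **Non-increasing cost for nonlinear systems (Corollary 1).**
Consider the `P`-periodic system `x (t+1) = f t (x t) (u t)` under Assumptions 1–4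
(in particular Assumption 3 holds and the stage cost depends only on the state),
in closed loop with the LMPC that at each time `t ≥ P` applies the first input of an
optimal plan, where the optimal value `J^LMPC = vstar t` is attained.  Then
`J^LMPC_{t→t+N}(x t) ≥ J^LMPC_{t+1→t+1+N}(x (t+1))` for all `t ≥ P`. -/
theorem lmpc_nonincreasing_cost_nonlinear {n d : ℕ} (P N : ℕ) (hN : 1 ≤ N) (hNP : N < P)
    (f : ℕ → (Fin n → ℝ) → (Fin d → ℝ) → (Fin n → ℝ))
    (hf : ∀ t, f (t + P) = f t)
    (X : ℕ → Set (Fin n → ℝ)) (U : ℕ → Set (Fin d → ℝ))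
    -- Assumption 1 (with Assumption 4: the stage cost does not depend on the input):
    (hX : ∀ t, Convex ℝ (X t)) (hXper : ∀ t, X (t + P) = X t)
    (hU : ∀ t, Convex ℝ (U t)) (hUper : ∀ t, U (t + P) = U t)
    (h : ℕ → (Fin n → ℝ) → ℝ)
    (hconv : ∀ k, ConvexOn ℝ Set.univ (h k))
    (hhper : ∀ k, h (k + P) = h k)
    -- Assumption 3:
    (hA3 : ∀ (t' L : ℕ) (xs : Fin (L + 1) → Fin n → ℝ) (us : Fin (L + 1) → Fin d → ℝ),
      (∀ j, xs j ∈ X t' ∧ us j ∈ U t' ∧ f t' (xs j) (us j) ∈ X (t' + 1)) →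
      ∀ lam : Fin (L + 1) → ℝ, (∀ j, 0 ≤ lam j) → (∑ j, lam j = 1) →
        ∃ gam : Fin (L + 1) → ℝ, (∀ j, 0 ≤ gam j) ∧ (∑ j, gam j = 1) ∧
          f t' (∑ j, lam j • xs j) (∑ j, gam j • us j) = ∑ j, lam j • f t' (xs j) (us j))
    -- closed-loop trajectory and inputs:
    (x : ℕ → Fin n → ℝ) (u : ℕ → Fin d → ℝ)
    -- Assumption 2: feasible `P`-periodic initial trajectory on `0, …, P`:
    (hdyn0 : ∀ k, k < P → x (k + 1) = f k (x k) (u k))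
    (hxcon0 : ∀ k, k ≤ P → x k ∈ X k)
    (hucon0 : ∀ k, k < P → u k ∈ U k)
    (hper0 : x P = x 0)
    -- the LMPC optimal value `vstar t` is attained for every `t ≥ P`:
    (vstar : ℕ → ℝ)
    (hopt : ∀ t, P ≤ t → IsLeast
      {c : ℝ | ∃ xb ub lam, FeasPlanNL P N f X U x t xb ub lam ∧
        PlanCostNL P N h x t xb lam = c} (vstar t))
    -- the closed loop applies the first input of an optimal plan:
    (hsel : ∀ t, P ≤ t → ∃ xb ub lam,
      FeasPlanNL P N f X U x t xb ub lam ∧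
      PlanCostNL P N h x t xb lam = vstar t ∧ u t = ub t)
    (hcl : ∀ t, P ≤ t → x (t + 1) = f t (x t) (u t)) :
    ∀ t, P ≤ t → vstar t ≥ vstar (t + 1) :=
  lmpc_nonincreasing_cost_nonlinear_general P N hN hNP f hf X U hX hXper hU hUper h hconv hhper hA3
    x u hdyn0 hxcon0 hucon0 vstar hopt hsel hcl
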